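/- Define φ(z,s) = 4⁻¹(2(z₁′ − z₁) + 2 z₁^{1/2} z₂, z₁^{1/2})·(−s, s²) for z = (z₁,z₂) with z₁ > 0, fixed z₁′ ∈ ℝ, and s ∈ ℝ. Then the 2×2 matrix M(φ)(z,s) whose rows are ∇_z ∂_s φ and ∇_z ∂_s² φ has determinant identically equal to 1/8. -/

import Mathlib

/-!
The phase is quadratic in `s`, with `∂ₛφ = (s√z₁ - (z₁' - z₁) - √z₁ z₂) / 2` and
`∂ₛ²φ = √z₁ / 2`. Since `∂ₛ²φ` does not depend on `z₂`, the entry `∂_{z₂}∂ₛ²φ`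
vanishes, so `∂_{z₁}∂ₛφ` never needs computing and the determinant is
`-∂_{z₂}∂ₛφ · ∂_{z₁}∂ₛ²φ = (√z₁ / 2) · (4√z₁)⁻¹ = 1/8`.
-/

open Real

noncomputable def csPhase (z₁' z₁ z₂ s : ℝ) : ℝ :=
  4⁻¹ * (-s * (2 * (z₁' - z₁) + 2 * Real.sqrt z₁ * z₂) + s ^ 2 * Real.sqrt z₁)

theorem hasDerivAt_csPhase (z₁' z₁ z₂ s : ℝ) :
    HasDerivAt (csPhase z₁' z₁ z₂) ((s * √z₁ - (z₁' - z₁) - √z₁ * z₂) / 2) s :=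
  (((hasDerivAt_id s).neg.mul_const (2 * (z₁' - z₁) + 2 * √z₁ * z₂)).add
      ((hasDerivAt_pow 2 s).mul_const √z₁)).const_mul (4⁻¹ : ℝ) |>.congr_deriv (by
    simp only [Nat.cast_ofNat, Nat.add_one_sub_one, pow_one]; ring)

theorem deriv_csPhase (z₁' z₁ z₂ : ℝ) :
    deriv (csPhase z₁' z₁ z₂) = fun s => (s * √z₁ - (z₁' - z₁) - √z₁ * z₂) / 2 :=
  funext fun s => (hasDerivAt_csPhase z₁' z₁ z₂ s).deriv

theorem deriv_deriv_csPhase (z₁' z₁ z₂ : ℝ) :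
    deriv (deriv (csPhase z₁' z₁ z₂)) = fun _ => √z₁ / 2 := by
  rw [deriv_csPhase]
  funext s
  simp

theorem deriv_z₂_deriv_csPhase (z₁' z₁ z₂ s : ℝ) :
    deriv (fun w => deriv (csPhase z₁' z₁ w) s) z₂ = -√z₁ / 2 := by
  simp [deriv_csPhase]

theorem deriv_z₂_deriv_deriv_csPhase (z₁' z₁ z₂ s : ℝ) :
    deriv (fun w => deriv (deriv (csPhase z₁' z₁ w)) s) z₂ = 0 := by
  simp [deriv_deriv_csPhase]

theorem deriv_z₁_deriv_deriv_csPhase (z₁' z₂ s : ℝ) {z₁ : ℝ} (hz₁ : z₁ ≠ 0) :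
    deriv (fun w => deriv (deriv (csPhase z₁' w z₂)) s) z₁ = (4 * √z₁)⁻¹ := by
  simp only [deriv_deriv_csPhase]
  rw [deriv_div_const, (hasDerivAt_sqrt hz₁).deriv]
  ring

theorem carleson_sjolin_det (z₁' z₁ z₂ s : ℝ) (hz₁ : 0 < z₁) :
    Matrix.det
      ![![deriv (fun w => deriv (fun u => csPhase z₁' w z₂ u) s) z₁,
         deriv (fun w => deriv (fun u => csPhase z₁' z₁ w u) s) z₂],
        ![deriv (fun w => deriv (deriv (fun u => csPhase z₁' w z₂ u)) s) z₁,
         deriv (fun w => deriv (deriv (fun u => csPhase z₁' z₁ w u)) s) z₂]]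
      = 1 / 8 := by
  refine (Matrix.det_fin_two _).trans ?_
  simp only [Matrix.cons_val_zero, Matrix.cons_val_one]
  rw [deriv_z₂_deriv_deriv_csPhase, deriv_z₂_deriv_csPhase,
    deriv_z₁_deriv_deriv_csPhase _ _ _ hz₁.ne', mul_zero, zero_sub]
  field_simp [(sqrt_pos.2 hz₁).ne']
  norm_num
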